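/- Let r ≤ s ≤ n, let A be a normal complex n×n matrix of rank r with nonzero eigenvalues λ_1, …, λ_r, and let B be a normal complex n×n matrix of rank s with nonzero eigenvalues λ̂_1, …, λ̂_s. Set F̂ = Σ_{j=1}^r |λ_j|² + Σ_{j=1}^s |λ̂_j|². Then ‖ |A| − |B| ‖_F ≥ min sqrt( (F̂ − 2 Σ_{t=1}^k |λ̂_{i_t}| |λ_{j_t}|) / (F̂ − 2 Σ_{t=1}^k Re(λ̂_{i_t} · conj(λ_{j_t}))) ) · ‖A − B‖_F, where the minimum is taken over all 1 ≤ k ≤ r, all k-tuples (i_1, …, i_k) of pairwise distinct indices in {1, …, s}, and all k-tuples (j_1, …, j_k) of pairwise distinct indices in {1, …, r}. -/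

import Mathlib

open scoped BigOperators Matrix ComplexOrder

noncomputable def frob {m n : ℕ} (A : Matrix (Fin m) (Fin n) ℂ) : ℝ :=
  Real.sqrt (∑ i, ∑ j, ‖A i j‖ ^ 2)

noncomputable def absMat {m n : ℕ} (A : Matrix (Fin m) (Fin n) ℂ) :
    Matrix (Fin n) (Fin n) ℂ :=
  (Matrix.posSemidef_conjTranspose_mul_self A).1.eigenvectorUnitary.1 *
    Matrix.diagonal ((↑) ∘ (√·) ∘ (Matrix.posSemidef_conjTranspose_mul_self A).1.eigenvalues) *
    (star (Matrix.posSemidef_conjTranspose_mul_self A).1.eigenvectorUnitary : Matrix (Fin n) (Fin n) ℂ)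

noncomputable def svdMat (m n r : ℕ) (σ : ℕ → ℝ) : Matrix (Fin m) (Fin n) ℂ :=
  Matrix.of fun i j =>
    if (i : ℕ) = (j : ℕ) ∧ (i : ℕ) < r then ((σ ((i : ℕ) + 1) : ℝ) : ℂ) else 0

/-- `A` admits a singular value decomposition with singular values
`σ 1, …, σ r` (indexed from 1) on the diagonal. -/
def HasSVD {m n : ℕ} (A : Matrix (Fin m) (Fin n) ℂ) (r : ℕ) (σ : ℕ → ℝ) : Prop :=
  ∃ (U : Matrix (Fin m) (Fin m) ℂ) (V : Matrix (Fin n) (Fin n) ℂ),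
    Uᴴ * U = 1 ∧ U * Uᴴ = 1 ∧ Vᴴ * V = 1 ∧ V * Vᴴ = 1 ∧
    A = U * svdMat m n r σ * Vᴴ

/-- `σ 1 ≥ σ 2 ≥ … ≥ σ r > 0`. -/
def SingVals (r : ℕ) (σ : ℕ → ℝ) : Prop :=
  (∀ j, 1 ≤ j → j ≤ r → 0 < σ j) ∧ ∀ j, 1 ≤ j → j < r → σ (j + 1) ≤ σ j

/-- Generalized polar decomposition: `A = Q * |A|`, where `Q` is a rank-`r` partial
isometry such that the column space of `Qᴴ` equals the column space of `|A|`. -/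
def IsPolar {m n : ℕ} (A Q : Matrix (Fin m) (Fin n) ℂ) (r : ℕ) : Prop :=
  A = Q * absMat A ∧ Q * Qᴴ * Q = Q ∧ Q.rank = r ∧
    LinearMap.range (Matrix.mulVecLin Qᴴ) =
      LinearMap.range (Matrix.mulVecLin (absMat A))

/-- `A` is unitarily diagonalizable with eigenvalues `l 1, …, l r` (indexed from 1)
followed by zeros on the diagonal. -/
def HasEigen {n : ℕ} (A : Matrix (Fin n) (Fin n) ℂ) (r : ℕ) (l : ℕ → ℂ) : Prop :=
  ∃ U : Matrix (Fin n) (Fin n) ℂ, Uᴴ * U = 1 ∧ U * Uᴴ = 1 ∧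
    A = U * Matrix.diagonal (fun i : Fin n =>
      if (i : ℕ) < r then l ((i : ℕ) + 1) else 0) * Uᴴ

/-!
Write `A = U D Uᴴ` and `B = V E Vᴴ` with `D = diag d`, `E = diag e`, and put `W = Vᴴ U`. Since
`U D Uᴴ - V E Vᴴ = V (W D - E W) Uᴴ`, we get `‖A - B‖² = ∑ |W_qp|² |e_q - d_p|²`, and likewise
`‖|A| - |B|‖² = ∑ |W_qp|² (|e_q| - |d_p|)²` because `|A| = U |D| Uᴴ`. The matrix `(|W_qp|²)` is
doubly stochastic, so by Birkhoff's theorem both squared norms are the same convex combination, over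
permutations `σ`, of `∑_q |e_q - d_σq|²` and `∑_q (|e_q| - |d_σq|)²`; by the mediant inequality
the ratio of the two combinations is at least the ratio for a single `σ`. The indices `q` at which
both `e_q` and `d_σq` are nonzero form the `k`-tuples of the bound, and when there are none that
ratio is `1`.
-/

open Matrix

section Frobenius

variable {m n : ℕ}

lemma frob_nonneg (M : Matrix (Fin m) (Fin n) ℂ) : 0 ≤ frob M := Real.sqrt_nonneg _

lemma frob_sq (M : Matrix (Fin m) (Fin n) ℂ) : frob M ^ 2 = ∑ i, ∑ j, ‖M i j‖ ^ 2 :=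
  Real.sq_sqrt <| by positivity

lemma frob_sq_eq_re_trace (M : Matrix (Fin m) (Fin n) ℂ) : frob M ^ 2 = (Mᴴ * M).trace.re := by
  rw [frob_sq, Finset.sum_comm]
  simp [Matrix.trace, Matrix.mul_apply, Complex.conj_mul', ← Complex.ofReal_pow]

lemma frob_unitary_mul_mul {U V : Matrix (Fin n) (Fin n) ℂ} (hU : U ∈ unitaryGroup (Fin n) ℂ)
    (hV : V ∈ unitaryGroup (Fin n) ℂ) (M : Matrix (Fin n) (Fin n) ℂ) :
    frob (V * M * Uᴴ) = frob M := by
  have hU' : Uᴴ * U = 1 := Unitary.star_mul_self_of_mem hU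
  have hV' : Vᴴ * V = 1 := Unitary.star_mul_self_of_mem hV
  have h : (V * M * Uᴴ)ᴴ * (V * M * Uᴴ) = U * (Mᴴ * M) * Uᴴ := by
    simp only [conjTranspose_mul, conjTranspose_conjTranspose, Matrix.mul_assoc]
    rw [← Matrix.mul_assoc Vᴴ, hV', Matrix.one_mul]
  have hsq : frob (V * M * Uᴴ) ^ 2 = frob M ^ 2 := by
    rw [frob_sq_eq_re_trace, frob_sq_eq_re_trace, h, trace_mul_cycle, hU', Matrix.one_mul]
  exact (pow_left_inj₀ (frob_nonneg _) (frob_nonneg _) two_ne_zero).1 hsq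

end Frobenius

section UnitaryConj

variable {n : ℕ} {U V : Matrix (Fin n) (Fin n) ℂ}

lemma frob_sq_conj_diagonal_sub (hU : U ∈ unitaryGroup (Fin n) ℂ)
    (hV : V ∈ unitaryGroup (Fin n) ℂ) (d e : Fin n → ℂ) :
    frob (U * diagonal d * Uᴴ - V * diagonal e * Vᴴ) ^ 2 =
      ∑ q, ∑ p, ‖(Vᴴ * U) q p‖ ^ 2 * ‖e q - d p‖ ^ 2 := by
  have hU' : U * Uᴴ = 1 := Unitary.mul_star_self_of_mem hU
  have hV' : V * Vᴴ = 1 := Unitary.mul_star_self_of_mem hV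
  have hsplit : U * diagonal d * Uᴴ - V * diagonal e * Vᴴ =
      V * (Vᴴ * U * diagonal d - diagonal e * (Vᴴ * U)) * Uᴴ := by
    simp only [Matrix.mul_sub, Matrix.sub_mul, ← Matrix.mul_assoc, hV', Matrix.one_mul]
    simp only [Matrix.mul_assoc, hU', Matrix.mul_one]
  rw [hsplit, frob_unitary_mul_mul hU hV, frob_sq]
  refine Finset.sum_congr rfl fun q _ => Finset.sum_congr rfl fun p _ => ?_
  rw [Matrix.sub_apply, mul_diagonal, diagonal_mul, mul_comm (e q), ← mul_sub, norm_mul, mul_pow,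
    norm_sub_rev]

lemma frob_sq_conj_diagonal_norm_sub (hU : U ∈ unitaryGroup (Fin n) ℂ)
    (hV : V ∈ unitaryGroup (Fin n) ℂ) (d e : Fin n → ℂ) :
    frob (U * diagonal (fun i => (‖d i‖ : ℂ)) * Uᴴ - V * diagonal (fun i => (‖e i‖ : ℂ)) * Vᴴ) ^ 2 =
      ∑ q, ∑ p, ‖(Vᴴ * U) q p‖ ^ 2 * (‖e q‖ - ‖d p‖) ^ 2 := by
  rw [frob_sq_conj_diagonal_sub hU hV]
  simp only [← Complex.ofReal_sub, Complex.norm_real, Real.norm_eq_abs, sq_abs]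

end UnitaryConj

section AbsMat

open scoped MatrixOrder

variable {n : ℕ}

lemma absMat_eq_cfcSqrt (A : Matrix (Fin n) (Fin n) ℂ) : absMat A = CFC.sqrt (Aᴴ * A) := by
  have hA := posSemidef_conjTranspose_mul_self A
  rw [CFC.sqrt_eq_cfc, cfc_nnreal_eq_real _ (Aᴴ * A) hA.nonneg, hA.1.cfc_eq]
  simp only [absMat, IsHermitian.cfc, Unitary.conjStarAlgAut_apply]
  congr 3
  funext i
  simp [Real.coe_sqrt, max_eq_left (hA.eigenvalues_nonneg i)]

lemma absMat_conj_diagonal {U : Matrix (Fin n) (Fin n) ℂ} (hU : U ∈ unitaryGroup (Fin n) ℂ)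
    (d : Fin n → ℂ) :
    absMat (U * diagonal d * Uᴴ) = U * diagonal (fun i => (‖d i‖ : ℂ)) * Uᴴ := by
  have hU' : Uᴴ * U = 1 := Unitary.star_mul_self_of_mem hU
  have hconj : ∀ D D' : Matrix (Fin n) (Fin n) ℂ, U * D * Uᴴ * (U * D' * Uᴴ) = U * (D * D') * Uᴴ :=
    fun D D' => by simp only [Matrix.mul_assoc, ← Matrix.mul_assoc Uᴴ U, hU', Matrix.one_mul]
  rw [absMat_eq_cfcSqrt]
  refine CFC.sqrt_unique ?_ ?_
  · have hstar : (U * diagonal d * Uᴴ)ᴴ = U * diagonal (star d) * Uᴴ := by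
      simp [Matrix.mul_assoc]
    rw [hstar, hconj, hconj, diagonal_mul_diagonal, diagonal_mul_diagonal]
    congr 3
    funext i
    rw [Pi.star_apply, Complex.star_def, ← sq, Complex.conj_mul']
  · exact ((posSemidef_diagonal_iff.2 fun i => Complex.zero_le_real.2 (norm_nonneg (d i))
      ).mul_mul_conjTranspose_same U).nonneg

end AbsMat

section Birkhoff

variable {ι : Type*} [Fintype ι] [DecidableEq ι]

lemma normSq_entries_mem_doublyStochastic {W : Matrix ι ι ℂ} (hW : W ∈ unitaryGroup ι ℂ) :
    of (fun i j => ‖W i j‖ ^ 2) ∈ doublyStochastic ℝ ι := by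
  have hWW : W * Wᴴ = 1 := Unitary.mul_star_self_of_mem hW
  have hWW' : Wᴴ * W = 1 := Unitary.star_mul_self_of_mem hW
  refine mem_doublyStochastic_iff_sum.2 ⟨fun _ _ => sq_nonneg _, fun i => ?_, fun j => ?_⟩
  · have h : (W * Wᴴ) i i = 1 := by rw [hWW, one_apply_eq]
    simp only [mul_apply, conjTranspose_apply, Complex.star_def, Complex.mul_conj'] at h
    exact_mod_cast h
  · have h : (Wᴴ * W) j j = 1 := by rw [hWW', one_apply_eq]
    simp only [mul_apply, conjTranspose_apply, Complex.star_def, Complex.conj_mul'] at h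
    exact_mod_cast h

lemma exists_perm_weights_of_mem_doublyStochastic {M : Matrix ι ι ℝ}
    (hM : M ∈ doublyStochastic ℝ ι) :
    ∃ w : Equiv.Perm ι → ℝ, (∀ σ, 0 ≤ w σ) ∧ ∑ σ, w σ = 1 ∧
      ∀ f : ι → ι → ℝ, ∑ i, ∑ j, M i j * f i j = ∑ σ, w σ * ∑ i, f i (σ i) := by
  obtain ⟨w, hw0, hw1, hwM⟩ := exists_eq_sum_perm_of_mem_doublyStochastic hM
  have hentry : ∀ i j, M i j = ∑ σ, if σ i = j then w σ else 0 := fun i j => by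
    simp [← hwM, Matrix.sum_apply, Equiv.Perm.permMatrix, PEquiv.toMatrix_apply]
  refine ⟨w, hw0, hw1, fun f => ?_⟩
  simp only [hentry, Finset.sum_mul, ite_mul, zero_mul, Finset.mul_sum]
  refine (Finset.sum_congr rfl fun i _ => Finset.sum_comm).trans ?_
  simp only [Finset.sum_ite_eq, Finset.mem_univ, if_true]
  exact Finset.sum_comm

end Birkhoff

lemma exists_mul_le_mul_of_convex_weights {κ : Type*} [Fintype κ] {w : κ → ℝ}
    (hw0 : ∀ i, 0 ≤ w i) (hw1 : ∑ i, w i = 1) (a b : κ → ℝ) :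
    ∃ i, b i * ∑ j, w j * a j ≤ (∑ j, w j * b j) * a i := by
  set A := ∑ j, w j * a j
  set B := ∑ j, w j * b j
  -- otherwise averaging `B * a j < b j * A` against `w` gives `B * A < B * A`
  by_contra! h
  obtain ⟨i, hi⟩ : ∃ i, 0 < w i := by
    by_contra! h0
    simp [le_antisymm (h0 _) (hw0 _)] at hw1
  have hlt : ∑ j, w j * (B * a j) < ∑ j, w j * (b j * A) :=
    Finset.sum_lt_sum (fun j _ => mul_le_mul_of_nonneg_left (h j).le (hw0 j))
      ⟨i, Finset.mem_univ _, mul_lt_mul_of_pos_left (h i) hi⟩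
  have hL : ∑ j, w j * (B * a j) = B * A := by simp only [mul_left_comm (w _), ← Finset.mul_sum, A]
  have hR : ∑ j, w j * (b j * A) = B * A := by simp only [← mul_assoc, ← Finset.sum_mul, B]
  linarith

lemma mul_le_of_mul_sq_le_sq_mul {x a b X Y : ℝ} (hx : x ≤ √(b / a)) (ha : 0 ≤ a) (hX : 0 ≤ X)
    (hY : 0 ≤ Y) (h : b * X ^ 2 ≤ Y ^ 2 * a) : x * X ≤ Y := by
  calc x * X ≤ √(b / a) * X := mul_le_mul_of_nonneg_right hx hX
    _ = √(b / a * X ^ 2) := by rw [Real.sqrt_mul' _ (sq_nonneg X), Real.sqrt_sq hX]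
    _ ≤ √(Y ^ 2) := by
      refine Real.sqrt_le_sqrt ?_
      rcases ha.eq_or_lt with rfl | ha
      · simpa using sq_nonneg Y
      · rwa [div_mul_eq_mul_div, div_le_iff₀ ha]
    _ = Y := Real.sqrt_sq hY

lemma re_mul_conj_le_norm_mul_norm (z w : ℂ) : (z * starRingEnd ℂ w).re ≤ ‖z‖ * ‖w‖ :=
  (Complex.re_le_norm _).trans_eq (by rw [norm_mul, Complex.norm_conj])

section PermSums

variable {ι : Type*} [Fintype ι] (σ : Equiv.Perm ι) (d e : ι → ℂ)

lemma sum_norm_sub_perm_sq :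
    ∑ q, ‖e q - d (σ q)‖ ^ 2 =
      ∑ q, ‖e q‖ ^ 2 + ∑ q, ‖d q‖ ^ 2 - 2 * ∑ q, (e q * starRingEnd ℂ (d (σ q))).re := by
  rw [← Equiv.sum_comp σ (fun q => ‖d q‖ ^ 2), Finset.mul_sum, ← Finset.sum_add_distrib,
    ← Finset.sum_sub_distrib]
  refine Finset.sum_congr rfl fun q _ => ?_
  simp only [Complex.sq_norm, Complex.normSq_sub]

lemma sum_norm_sub_norm_perm_sq :
    ∑ q, (‖e q‖ - ‖d (σ q)‖) ^ 2 =
      ∑ q, ‖e q‖ ^ 2 + ∑ q, ‖d q‖ ^ 2 - 2 * ∑ q, ‖e q‖ * ‖d (σ q)‖ := by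
  rw [← Equiv.sum_comp σ (fun q => ‖d q‖ ^ 2), Finset.mul_sum, ← Finset.sum_add_distrib,
    ← Finset.sum_sub_distrib]
  exact Finset.sum_congr rfl fun q _ => by ring

end PermSums

lemma exists_injective_pairs_of_perm {n : ℕ} (r s : ℕ) (σ : Equiv.Perm (Fin n)) :
    ∃ k, ∃ i : Fin k → Fin s, Function.Injective i ∧ ∃ j : Fin k → Fin r, Function.Injective j ∧
      ∀ g : ℕ → ℕ → ℝ, (∀ a b, s ≤ a → g a b = 0) → (∀ a b, r ≤ b → g a b = 0) →
        ∑ q : Fin n, g q (σ q) = ∑ t, g (i t) (j t) := by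
  classical
  set T := Finset.univ.filter fun q : Fin n => (q : ℕ) < s ∧ (σ q : ℕ) < r
  set e : Fin T.card ≃ T := T.equivFin.symm
  have hmem : ∀ t, (e t : ℕ) < s ∧ (σ (e t) : ℕ) < r := fun t => (Finset.mem_filter.1 (e t).2).2
  refine ⟨T.card, fun t => ⟨e t, (hmem t).1⟩, fun t t' h => ?_,
    fun t => ⟨σ (e t), (hmem t).2⟩, fun t t' h => ?_, fun g hs hr => ?_⟩
  · exact e.injective (Subtype.ext (Fin.ext (Fin.mk.inj h)))
  · exact e.injective (Subtype.ext (σ.injective (Fin.ext (Fin.mk.inj h))))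
  · have hout : ∀ q ∈ Finset.univ, q ∉ T → g q (σ q) = 0 := fun q _ hq => by
      rcases not_and_or.1 fun h => hq (Finset.mem_filter.2 ⟨Finset.mem_univ q, h⟩) with h | h
      · exact hs _ _ (not_lt.1 h)
      · exact hr _ _ (not_lt.1 h)
    rw [← Finset.sum_subset (Finset.subset_univ T) hout, ← Finset.sum_coe_sort T]
    exact (e.sum_comp fun x : T => g x (σ x)).symm

/-- The diagonal `l 1, …, l r, 0, 0, …` of `HasEigen`, indexed from `0`. -/
def eigenPad (r : ℕ) (l : ℕ → ℂ) (a : ℕ) : ℂ := if a < r then l (a + 1) else 0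

lemma eigenPad_of_lt {r a : ℕ} (l : ℕ → ℂ) (h : a < r) : eigenPad r l a = l (a + 1) := if_pos h

lemma eigenPad_of_le {r a : ℕ} (l : ℕ → ℂ) (h : r ≤ a) : eigenPad r l a = 0 :=
  if_neg (not_lt.2 h)

lemma HasEigen.exists_unitary {n r : ℕ} {A : Matrix (Fin n) (Fin n) ℂ} {l : ℕ → ℂ}
    (h : HasEigen A r l) :
    ∃ U ∈ unitaryGroup (Fin n) ℂ, A = U * diagonal (fun i : Fin n => eigenPad r l i) * Uᴴ :=
  let ⟨U, hU1, hU2, hA⟩ := h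
  ⟨U, ⟨hU1, hU2⟩, hA⟩

lemma sum_norm_sq_eigenPad {n r : ℕ} (hrn : r ≤ n) (l : ℕ → ℂ) :
    ∑ i : Fin n, ‖eigenPad r l i‖ ^ 2 = ∑ j ∈ Finset.Icc 1 r, ‖l j‖ ^ 2 := by
  rw [Fin.sum_univ_eq_sum_range (fun a => ‖eigenPad r l a‖ ^ 2),
    ← Finset.sum_range_add_sum_Ico _ hrn,
    Finset.sum_eq_zero (s := Finset.Ico r n) fun a ha => by
      rw [eigenPad_of_le l (Finset.mem_Ico.1 ha).1, norm_zero, sq, mul_zero],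
    add_zero, ← Finset.Ico_add_one_right_eq_Icc, Finset.sum_Ico_eq_sum_range, add_tsub_cancel_right]
  exact Finset.sum_congr rfl fun a ha => by
    rw [eigenPad_of_lt l (Finset.mem_range.1 ha), add_comm]

def kittanehRatios (r s : ℕ) (l lh : ℕ → ℂ) (Fh : ℝ) : Set ℝ :=
  {x : ℝ | ∃ k : ℕ, 1 ≤ k ∧ k ≤ r ∧
    ∃ i : Fin k → Fin s, Function.Injective i ∧
    ∃ jj : Fin k → Fin r, Function.Injective jj ∧
    x = Real.sqrt
      ((Fh - 2 * ∑ t, ‖lh ((i t : ℕ) + 1)‖ * ‖l ((jj t : ℕ) + 1)‖) /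
       (Fh - 2 * ∑ t, (lh ((i t : ℕ) + 1) *
          (starRingEnd ℂ) (l ((jj t : ℕ) + 1))).re))}

section KittanehRatios

variable {r s : ℕ} {l lh : ℕ → ℂ} {Fh : ℝ}

lemma kittanehRatios_zero_left : kittanehRatios 0 s l lh Fh = ∅ :=
  Set.eq_empty_of_forall_notMem fun _ ⟨_, hk1, hk0, _⟩ => by omega

lemma sInf_kittanehRatios_le {x : ℝ} (hx : x ∈ kittanehRatios r s l lh Fh) :
    sInf (kittanehRatios r s l lh Fh) ≤ x :=
  csInf_le ⟨0, by rintro _ ⟨_, _, _, _, _, _, _, rfl⟩; exact Real.sqrt_nonneg _⟩ hx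

lemma norm_sq_add_norm_sq_le (hr : 0 < r) (hrs : r ≤ s)
    (hFh : Fh = ∑ j ∈ Finset.Icc 1 r, ‖l j‖ ^ 2 + ∑ j ∈ Finset.Icc 1 s, ‖lh j‖ ^ 2) :
    ‖l 1‖ ^ 2 + ‖lh 1‖ ^ 2 ≤ Fh := hFh ▸ add_le_add
  (Finset.single_le_sum (fun j _ => sq_nonneg ‖l j‖) (Finset.mem_Icc.2 ⟨le_rfl, hr⟩))
  (Finset.single_le_sum (fun j _ => sq_nonneg ‖lh j‖) (Finset.mem_Icc.2 ⟨le_rfl, hr.trans_le hrs⟩))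

lemma sInf_kittanehRatios_le_one (hr : 0 < r) (hrs : r ≤ s)
    (hFh : Fh = ∑ j ∈ Finset.Icc 1 r, ‖l j‖ ^ 2 + ∑ j ∈ Finset.Icc 1 s, ‖lh j‖ ^ 2) :
    sInf (kittanehRatios r s l lh Fh) ≤ 1 := by
  have hsq := norm_sq_add_norm_sq_le hr hrs hFh
  have hnum : 0 ≤ Fh - 2 * (‖lh 1‖ * ‖l 1‖) := by nlinarith [sq_nonneg (‖lh 1‖ - ‖l 1‖)]
  have hden : Fh - 2 * (‖lh 1‖ * ‖l 1‖) ≤ Fh - 2 * (lh 1 * starRingEnd ℂ (l 1)).re := by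
    linarith [re_mul_conj_le_norm_mul_norm (lh 1) (l 1)]
  refine (sInf_kittanehRatios_le ⟨1, le_rfl, hr, fun _ => ⟨0, hr.trans_le hrs⟩,
    fun _ _ _ => Subsingleton.elim _ _, fun _ => ⟨0, hr⟩, fun _ _ _ => Subsingleton.elim _ _,
    rfl⟩).trans ?_
  simp only [Finset.univ_unique, Finset.sum_singleton, zero_add]
  exact Real.sqrt_le_one.2 (div_le_one_of_le₀ hden (hnum.trans hden))

lemma sInf_kittanehRatios_le_of_perm {n : ℕ} (hr : 0 < r) (hrs : r ≤ s) (hsn : s ≤ n)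
    (hl : l 1 ≠ 0)
    (hFh : Fh = ∑ j ∈ Finset.Icc 1 r, ‖l j‖ ^ 2 + ∑ j ∈ Finset.Icc 1 s, ‖lh j‖ ^ 2)
    (σ : Equiv.Perm (Fin n)) :
    sInf (kittanehRatios r s l lh Fh) ≤
      √((∑ q : Fin n, (‖eigenPad s lh q‖ - ‖eigenPad r l (σ q)‖) ^ 2) /
        ∑ q : Fin n, ‖eigenPad s lh q - eigenPad r l (σ q)‖ ^ 2) := by
  have hF : ∑ q : Fin n, ‖eigenPad s lh q‖ ^ 2 + ∑ q : Fin n, ‖eigenPad r l q‖ ^ 2 = Fh := by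
    rw [sum_norm_sq_eigenPad hsn, sum_norm_sq_eigenPad (hrs.trans hsn), hFh, add_comm]
  rw [sum_norm_sub_norm_perm_sq σ (fun q => eigenPad r l q) (fun q => eigenPad s lh q),
    sum_norm_sub_perm_sq σ (fun q => eigenPad r l q) (fun q => eigenPad s lh q), hF]
  obtain ⟨k, i, hi, j, hj, hsum⟩ := exists_injective_pairs_of_perm r s σ
  rw [hsum (fun a b => ‖eigenPad s lh a‖ * ‖eigenPad r l b‖)
      (fun a b h => by simp [eigenPad_of_le lh h]) (fun a b h => by simp [eigenPad_of_le l h]),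
    hsum (fun a b => (eigenPad s lh a * starRingEnd ℂ (eigenPad r l b)).re)
      (fun a b h => by simp [eigenPad_of_le lh h]) (fun a b h => by simp [eigenPad_of_le l h])]
  simp only [eigenPad_of_lt _ (Fin.is_lt _)]
  rcases k.eq_zero_or_pos with rfl | hk
  · have hF0 : Fh ≠ 0 := (lt_of_lt_of_le (add_pos_of_pos_of_nonneg
      (pow_pos (norm_pos_iff.2 hl) 2) (sq_nonneg _)) (norm_sq_add_norm_sq_le hr hrs hFh)).ne'
    simp only [Finset.univ_eq_empty, Finset.sum_empty, mul_zero, sub_zero, div_self hF0,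
      Real.sqrt_one]
    exact sInf_kittanehRatios_le_one hr hrs hFh
  · exact sInf_kittanehRatios_le ⟨k, hk, Fin.le_of_injective j hj, i, hi, j, hj, rfl⟩

end KittanehRatios

theorem sharp_lower_bound_kittaneh_general
    (n r s : ℕ) (hrs : r ≤ s) (hsn : s ≤ n)
    (A B : Matrix (Fin n) (Fin n) ℂ)
    (l lh : ℕ → ℂ)
    (hAe : HasEigen A r l) (hBe : HasEigen B s lh)
    (hl : ∀ j, 1 ≤ j → j ≤ r → l j ≠ 0)
    (Fh : ℝ)
    (hFh : Fh = ∑ j ∈ Finset.Icc 1 r, ‖l j‖ ^ 2 + ∑ j ∈ Finset.Icc 1 s, ‖lh j‖ ^ 2) :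
    frob (absMat A - absMat B) ≥
      sInf {x : ℝ | ∃ k : ℕ, 1 ≤ k ∧ k ≤ r ∧
        ∃ i : Fin k → Fin s, Function.Injective i ∧
        ∃ jj : Fin k → Fin r, Function.Injective jj ∧
        x = Real.sqrt
          ((Fh - 2 * ∑ t, ‖lh ((i t : ℕ) + 1)‖ * ‖l ((jj t : ℕ) + 1)‖) /
           (Fh - 2 * ∑ t, (lh ((i t : ℕ) + 1) *
              (starRingEnd ℂ) (l ((jj t : ℕ) + 1))).re))} *
      frob (A - B) := by
  change sInf (kittanehRatios r s l lh Fh) * frob (A - B) ≤ frob (absMat A - absMat B)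
  rcases Nat.eq_zero_or_pos r with rfl | hr
  · rw [kittanehRatios_zero_left, Real.sInf_empty, zero_mul]
    exact frob_nonneg _
  obtain ⟨U, hU, rfl⟩ := hAe.exists_unitary
  obtain ⟨V, hV, rfl⟩ := hBe.exists_unitary
  set d : Fin n → ℂ := fun i => eigenPad r l i
  set e : Fin n → ℂ := fun i => eigenPad s lh i
  obtain ⟨w, hw0, hw1, hw⟩ := exists_perm_weights_of_mem_doublyStochastic
    (normSq_entries_mem_doublyStochastic (mul_mem (Unitary.star_mem hV) hU))
  obtain ⟨σ, hσ⟩ := exists_mul_le_mul_of_convex_weights hw0 hw1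
    (fun σ => ∑ q, ‖e q - d (σ q)‖ ^ 2) (fun σ => ∑ q, (‖e q‖ - ‖d (σ q)‖) ^ 2)
  rw [absMat_conj_diagonal hU, absMat_conj_diagonal hV]
  refine mul_le_of_mul_sq_le_sq_mul
    (sInf_kittanehRatios_le_of_perm hr hrs hsn (hl 1 le_rfl hr) hFh σ)
    (by positivity) (frob_nonneg _) (frob_nonneg _) ?_
  rwa [(frob_sq_conj_diagonal_sub hU hV d e).trans (hw fun q p => ‖e q - d p‖ ^ 2),
    (frob_sq_conj_diagonal_norm_sub hU hV d e).trans (hw fun q p => (‖e q‖ - ‖d p‖) ^ 2)]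

theorem sharp_lower_bound_kittaneh
    (n r s : ℕ) (hrs : r ≤ s) (hsn : s ≤ n)
    (A B : Matrix (Fin n) (Fin n) ℂ)
    (hA : A * Aᴴ = Aᴴ * A) (hB : B * Bᴴ = Bᴴ * B)
    (l lh : ℕ → ℂ)
    (hAe : HasEigen A r l) (hBe : HasEigen B s lh)
    (hl : ∀ j, 1 ≤ j → j ≤ r → l j ≠ 0) (hlh : ∀ j, 1 ≤ j → j ≤ s → lh j ≠ 0)
    (hrankA : A.rank = r) (hrankB : B.rank = s)
    (Fh : ℝ)
    (hFh : Fh = ∑ j ∈ Finset.Icc 1 r, ‖l j‖ ^ 2 + ∑ j ∈ Finset.Icc 1 s, ‖lh j‖ ^ 2) :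
    frob (absMat A - absMat B) ≥
      sInf {x : ℝ | ∃ k : ℕ, 1 ≤ k ∧ k ≤ r ∧
        ∃ i : Fin k → Fin s, Function.Injective i ∧
        ∃ jj : Fin k → Fin r, Function.Injective jj ∧
        x = Real.sqrt
          ((Fh - 2 * ∑ t, ‖lh ((i t : ℕ) + 1)‖ * ‖l ((jj t : ℕ) + 1)‖) /
           (Fh - 2 * ∑ t, (lh ((i t : ℕ) + 1) *
              (starRingEnd ℂ) (l ((jj t : ℕ) + 1))).re))} *
      frob (A - B) :=
  sharp_lower_bound_kittaneh_general n r s hrs hsn A B l lh hAe hBe hl Fh hFh
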